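/- arXiv:math/0511017 — 2 statements merged into one kernel-verified Lean document; each statement's English description precedes it below -/
import Mathlib

section
/- Let M be a subset of Euclidean space ℝ^m, let x ∈ M, and let ξ ∈ ℝ^m be a nonzero vector. Suppose M is convex at x with respect to ξ, i.e., there exists a neighborhood U of x in ℝ^m such that either every y ∈ M ∩ U satisfies ⟨y − x, ξ⟩ ≥ 0, or every y ∈ M ∩ U satisfies ⟨y − x, ξ⟩ ≤ 0. Then the second-order normal form along curves is semidefinite: either for every C² curve c : ℝ → ℝ^m with image contained in M and c(0) = x one has ⟨c''(0), ξ⟩ ≥ 0, or for every such curve one has ⟨c''(0), ξ⟩ ≤ 0. -/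
open RealInnerProductSpace Filter Topology

/-! A curve `c` through `x` inside `M` stays, for small `t`, in the half-space bounding `M`
near `x`, so `t ↦ ⟪c t, ξ⟫` has a local extremum at `0`; by the second-derivative test its
second derivative `⟪c''(0), ξ⟫` has the corresponding sign. -/

theorem IsLocalMin.deriv_deriv_nonneg {f : ℝ → ℝ} {x₀ : ℝ} (hmin : IsLocalMin f x₀)
    (hc : ContinuousAt f x₀) : 0 ≤ deriv (deriv f) x₀ := by
  by_contra! hneg
  -- Otherwise `x₀` is also a local maximum, so `f` is locally constant and `f'' x₀ = 0`.
  have hmax : IsLocalMax f x₀ := isLocalMax_of_deriv_deriv_neg hneg hmin.deriv_eq_zero hc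
  have hconst : f =ᶠ[𝓝 x₀] fun _ => f x₀ := by
    filter_upwards [hmin, hmax] with x hx₁ hx₂
    exact le_antisymm hx₂ hx₁
  have hderiv : deriv f =ᶠ[𝓝 x₀] fun _ => 0 :=
    hconst.eventuallyEq_nhds.mono fun x hx => by rw [hx.deriv_eq, deriv_const]
  rw [hderiv.deriv_eq, deriv_const] at hneg
  exact lt_irrefl 0 hneg

theorem ContinuousLinearMap.iteratedDeriv_comp_left {𝕜 F G : Type*} [NontriviallyNormedField 𝕜]
    [NormedAddCommGroup F] [NormedSpace 𝕜 F] [NormedAddCommGroup G] [NormedSpace 𝕜 G]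
    {f : 𝕜 → F} {x : 𝕜} {n : WithTop ℕ∞} (g : F →L[𝕜] G) (hf : ContDiffAt 𝕜 n f x) {i : ℕ}
    (hi : i ≤ n) : iteratedDeriv i (g ∘ f) x = g (iteratedDeriv i f x) := by
  simp only [iteratedDeriv_eq_iteratedFDeriv, g.iteratedFDeriv_comp_left hf hi]
  rfl

section Halfspace

variable {E : Type*} [NormedAddCommGroup E] [InnerProductSpace ℝ E]

theorem inner_iteratedDeriv_two_nonneg_of_isLocalMin {c : ℝ → E} {ξ : E} {t₀ : ℝ}
    (hc : ContDiffAt ℝ 2 c t₀) (hmin : IsLocalMin (fun t => ⟪c t, ξ⟫) t₀) :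
    0 ≤ ⟪iteratedDeriv 2 c t₀, ξ⟫ := by
  have hcomp : (fun t => ⟪c t, ξ⟫) = (innerSL ℝ ξ) ∘ c := by
    ext t
    simp [real_inner_comm]
  have h := hmin.deriv_deriv_nonneg (hc.continuousAt.inner continuousAt_const)
  rwa [← iteratedDeriv_one, ← iteratedDeriv_succ', hcomp, (innerSL ℝ ξ).iteratedDeriv_comp_left hc le_rfl,
    innerSL_apply_apply, real_inner_comm] at h

theorem isLocalMin_inner_of_forall_mem_halfspace {M U : Set E} {x ξ : E} {c : ℝ → E}
    (hU : U ∈ 𝓝 x) (hhalf : ∀ y ∈ M ∩ U, 0 ≤ ⟪y - x, ξ⟫) (hc : ContinuousAt c 0)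
    (hcM : ∀ t, c t ∈ M) (hc0 : c 0 = x) : IsLocalMin (fun t => ⟪c t, ξ⟫) 0 := by
  have hcU : ∀ᶠ t in 𝓝 0, c t ∈ U := hc (hc0 ▸ hU)
  filter_upwards [hcU] with t ht
  have := hhalf (c t) ⟨hcM t, ht⟩
  rw [inner_sub_left, sub_nonneg, ← hc0] at this
  exact this

theorem inner_iteratedDeriv_two_nonneg_of_forall_mem_halfspace {M U : Set E} {x ξ : E}
    {c : ℝ → E} (hU : U ∈ 𝓝 x) (hhalf : ∀ y ∈ M ∩ U, 0 ≤ ⟪y - x, ξ⟫) (hc : ContDiff ℝ 2 c)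
    (hcM : ∀ t, c t ∈ M) (hc0 : c 0 = x) : 0 ≤ ⟪iteratedDeriv 2 c 0, ξ⟫ :=
  inner_iteratedDeriv_two_nonneg_of_isLocalMin hc.contDiffAt
    (isLocalMin_inner_of_forall_mem_halfspace hU hhalf hc.continuous.continuousAt hcM hc0)

end Halfspace

theorem udriste_convex_semidefinite_general
    {m : ℕ} (M : Set (EuclideanSpace ℝ (Fin m)))
    (x : EuclideanSpace ℝ (Fin m))
    (ξ : EuclideanSpace ℝ (Fin m))
    (hconv : ∃ U ∈ nhds x,
      (∀ y ∈ M ∩ U, 0 ≤ ⟪y - x, ξ⟫) ∨ (∀ y ∈ M ∩ U, ⟪y - x, ξ⟫ ≤ 0)) :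
    (∀ c : ℝ → EuclideanSpace ℝ (Fin m), ContDiff ℝ 2 c →
        (∀ t, c t ∈ M) → c 0 = x → 0 ≤ ⟪iteratedDeriv 2 c 0, ξ⟫) ∨
    (∀ c : ℝ → EuclideanSpace ℝ (Fin m), ContDiff ℝ 2 c →
        (∀ t, c t ∈ M) → c 0 = x → ⟪iteratedDeriv 2 c 0, ξ⟫ ≤ 0) := by
  obtain ⟨U, hU, hpos | hneg⟩ := hconv
  · exact Or.inl fun c hc hcM hc0 =>
      inner_iteratedDeriv_two_nonneg_of_forall_mem_halfspace hU hpos hc hcM hc0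
  · refine Or.inr fun c hc hcM hc0 => ?_
    have hpos' : ∀ y ∈ M ∩ U, 0 ≤ ⟪y - x, -ξ⟫ := fun y hy => by
      rw [inner_neg_right]
      exact neg_nonneg.mpr (hneg y hy)
    simpa [inner_neg_right] using
      inner_iteratedDeriv_two_nonneg_of_forall_mem_halfspace hU hpos' hc hcM hc0

/-- Euclidean case of Theorem 1.1 (Udrişte): if `M ⊆ ℝ^m` is convex at `x`
with respect to a nonzero vector `ξ` (locally contained in one of the closed
half-spaces determined by `ξ`), then the second-order form along curves,
`c ↦ ⟪c''(0), ξ⟫`, is semidefinite. -/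
theorem udriste_convex_semidefinite
    {m : ℕ} (M : Set (EuclideanSpace ℝ (Fin m)))
    (x : EuclideanSpace ℝ (Fin m)) (hxM : x ∈ M)
    (ξ : EuclideanSpace ℝ (Fin m)) (hξ : ξ ≠ 0)
    (hconv : ∃ U ∈ nhds x,
      (∀ y ∈ M ∩ U, 0 ≤ ⟪y - x, ξ⟫) ∨ (∀ y ∈ M ∩ U, ⟪y - x, ξ⟫ ≤ 0)) :
    (∀ c : ℝ → EuclideanSpace ℝ (Fin m), ContDiff ℝ 2 c →
        (∀ t, c t ∈ M) → c 0 = x → 0 ≤ ⟪iteratedDeriv 2 c 0, ξ⟫) ∨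
    (∀ c : ℝ → EuclideanSpace ℝ (Fin m), ContDiff ℝ 2 c →
        (∀ t, c t ∈ M) → c 0 = x → ⟪iteratedDeriv 2 c 0, ξ⟫ ≤ 0) :=
  udriste_convex_semidefinite_general M x ξ hconv
end

section
/- Let M = {(a, b, d) ∈ ℝ³ : d = a² + b³}. For every ε > 0 there exist points p, q ∈ M with ‖p‖ < ε and ‖q‖ < ε such that the third coordinate of p is strictly negative and the third coordinate of q is strictly positive. Consequently, there is no neighborhood U of the origin in ℝ³ such that M ∩ U is contained in the closed half-space {x³ ≥ 0} or in the closed half-space {x³ ≤ 0}; that is, M is not convex at the origin. -/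
private noncomputable def scPt (x : ℝ) : EuclideanSpace ℝ (Fin 3) :=
  (WithLp.equiv 2 (Fin 3 → ℝ)).symm ![0, x, x ^ 3]

private lemma scPt_apply (x : ℝ) (i : Fin 3) : scPt x i = ![0, x, x ^ 3] i := rfl

private lemma scPt_norm_lt {x ε : ℝ} (hx : |x| ≤ ε / 2) (hx1 : |x| ≤ 1) (hε : 0 < ε) :
    ‖scPt x‖ < ε := by
  rw [EuclideanSpace.norm_eq]
  rw [Real.sqrt_lt' hε]
  rw [Fin.sum_univ_three]
  simp only [scPt_apply, Matrix.cons_val_zero, Matrix.cons_val_one, Matrix.head_cons,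
    Matrix.cons_val_two, Matrix.tail_cons, Real.norm_eq_abs]
  have h2 : x ^ 2 ≤ (ε / 2) ^ 2 := by
    have := sq_abs x
    nlinarith [abs_nonneg x]
  have h2' : x ^ 2 ≤ 1 := by nlinarith [sq_abs x, abs_nonneg x]
  have h6 : (x ^ 3) ^ 2 ≤ x ^ 2 := by nlinarith [sq_nonneg x, sq_nonneg (x ^ 2), sq_nonneg (x ^ 2 - 1)]
  have : |(0:ℝ)| ^ 2 = 0 := by simp
  rw [this]
  calc 0 + |x| ^ 2 + |x ^ 3| ^ 2 = x ^ 2 + (x ^ 3) ^ 2 := by rw [sq_abs, sq_abs]; ring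
    _ ≤ (ε/2)^2 + (ε/2)^2 := by nlinarith
    _ < ε ^ 2 := by nlinarith

/-- The surface `M : x³ = (x¹)² + (x²)³` has points with negative and with
positive third coordinate arbitrarily close to the origin; consequently `M`
is not convex at the origin: no neighborhood `U` of `0` has `M ∩ U`
contained in `{x³ ≥ 0}` or in `{x³ ≤ 0}`. -/
theorem semicubic_surface_not_convex
    (M : Set (EuclideanSpace ℝ (Fin 3)))
    (hM : M = {p : EuclideanSpace ℝ (Fin 3) | p 2 = (p 0) ^ 2 + (p 1) ^ 3}) :
    (∀ ε > 0, ∃ p ∈ M, ∃ q ∈ M,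
      ‖p‖ < ε ∧ ‖q‖ < ε ∧ p 2 < 0 ∧ 0 < q 2) ∧
    ¬ ∃ U ∈ nhds (0 : EuclideanSpace ℝ (Fin 3)),
      (∀ y ∈ M ∩ U, 0 ≤ y 2) ∨ (∀ y ∈ M ∩ U, y 2 ≤ 0) := by
  have main : ∀ ε > (0:ℝ), ∃ p ∈ M, ∃ q ∈ M,
      ‖p‖ < ε ∧ ‖q‖ < ε ∧ p 2 < 0 ∧ 0 < q 2 := by
    intro ε hε
    set t : ℝ := min (ε / 2) 1 with ht
    have ht0 : 0 < t := lt_min (by linarith) one_pos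
    have htε : |t| ≤ ε / 2 := by rw [abs_of_pos ht0]; exact min_le_left _ _
    have ht1 : |t| ≤ 1 := by rw [abs_of_pos ht0]; exact min_le_right _ _
    have htε' : |(-t)| ≤ ε / 2 := by rwa [abs_neg]
    have ht1' : |(-t)| ≤ 1 := by rwa [abs_neg]
    refine ⟨scPt (-t), ?_, scPt t, ?_, scPt_norm_lt htε' ht1' hε,
      scPt_norm_lt htε ht1 hε, ?_, ?_⟩
    · rw [hM]; simp [scPt_apply]
    · rw [hM]; simp [scPt_apply]
    · show ((-t) ^ 3 : ℝ) < 0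
      have h := pow_pos ht0 3
      nlinarith [h]
    · show (0:ℝ) < t ^ 3
      positivity
  refine ⟨main, ?_⟩
  rintro ⟨U, hU, hcase⟩
  obtain ⟨δ, hδ, hball⟩ := Metric.mem_nhds_iff.mp hU
  obtain ⟨p, hp, q, hq, hpn, hqn, hp2, hq2⟩ := main δ hδ
  have hpU : p ∈ U := hball (by simpa [Metric.mem_ball, dist_zero_right] using hpn)
  have hqU : q ∈ U := hball (by simpa [Metric.mem_ball, dist_zero_right] using hqn)
  rcases hcase with h | h
  · exact absurd (h p ⟨hp, hpU⟩) (not_le.mpr hp2)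
  · exact absurd (h q ⟨hq, hqU⟩) (not_le.mpr hq2)
end
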